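/- arXiv:1305.0176 — 3 statements merged into one kernel-verified Lean document; each statement's English description precedes it below -/
import Mathlib

section
/- Let Ω₁ be a finite index set, A a fixed self-adjoint (real symmetric) Ω₁×Ω₁ matrix, and (V_i)_{i∈Ω₁} independent real random variables whose distributions all have densities bounded by ρ. Let D_V = Σ_{i∈Ω₁} V_i e_i⊗e_i. Then there is an absolute constant C such that for every κ > 0, the probability that the spectrum of D_V + A comes within distance κ of 0 (i.e., some eigenvalue of D_V + A has absolute value less than κ) is at most C·ρ·κ·|Ω₁|. -/
/-!
Let `G = (D_V + A - iκ)⁻¹`. The resolvent identity `G - G* = 2iκ G G*` gives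
`Im G_ii = κ ∑_j |G_ij|²`, so `∑_i Im G_ii = κ ‖G‖²_F`; if `D_V + A` has an eigenvalue `μ` with
`|μ| ≤ κ`, then `‖G‖_F ≥ |μ - iκ|⁻¹` and `∑_i Im G_ii ≥ κ / (μ² + κ²) ≥ 1 / (2κ)`. By Markov's
inequality it remains to show `𝔼 Im G_ii ≤ πρ`. By Cramer's rule `1 / G_ii` is affine in `V_i`,
so conditionally on the other potentials `G_ii = (V_i - w)⁻¹` with `Im w > 0`, and
`Im (V_i - w)⁻¹` is `π` times a Cauchy density; integrating it against a density bounded by `ρ`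
gives at most `πρ`. Altogether the probability is at most `2π ρ κ |Ω₁|`.
-/

open MeasureTheory ProbabilityTheory Real Matrix
open scoped ENNReal NNReal

namespace Matrix

theorem IsSymm.isHermitian_map_ofReal {n : Type*} {H : Matrix n n ℝ} (hH : H.IsSymm) :
    (H.map ((↑) : ℝ → ℂ)).IsHermitian :=
  (isHermitian_iff_isSymm.mpr hH).map _ fun x => (Complex.conj_ofReal x).symm

theorem IsSymm.isHermitian_map_ofReal_diagonal_add {n : Type*} [DecidableEq n]
    {A : Matrix n n ℝ} (hA : A.IsSymm) (v : n → ℝ) :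
    ((diagonal v + A).map ((↑) : ℝ → ℂ)).IsHermitian :=
  ((isSymm_diagonal v).add hA).isHermitian_map_ofReal

variable {n : Type*} [Fintype n]

theorem exists_mulVec_eq_smul_of_mem_spectrum [DecidableEq n] {K : Type*} [Field K]
    {H : Matrix n n K} {μ : K} (h : μ ∈ spectrum K H) : ∃ x ≠ 0, H *ᵥ x = μ • x := by
  rw [← spectrum_toLin', ← Module.End.hasEigenvalue_iff_mem_spectrum] at h
  obtain ⟨x, hx⟩ := h.exists_hasEigenvector
  exact ⟨x, hx.2, by simpa using hx.apply_eq_smul⟩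

section Frobenius

attribute [local instance] frobeniusNormedAddCommGroup frobeniusNormSMulClass

theorem sq_norm_le_sum_sq_norm_of_mulVec_eq_smul {𝕜 : Type*} [RCLike 𝕜] {G : Matrix n n 𝕜}
    {x : n → 𝕜} {c : 𝕜} (hx : x ≠ 0) (hGx : G *ᵥ x = c • x) :
    ‖c‖ ^ 2 ≤ ∑ i, ∑ j, ‖G i j‖ ^ 2 := by
  have hcol : 0 < ‖replicateCol Unit x‖ := by
    rw [norm_pos_iff]; exact fun h => hx (funext (congrFun₂ h · ()))
  have hc : ‖c‖ ≤ ‖G‖ := by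
    refine le_of_mul_le_mul_right ?_ hcol
    calc ‖c‖ * ‖replicateCol Unit x‖ = ‖G * replicateCol Unit x‖ := by
          rw [← replicateCol_mulVec, hGx, replicateCol_smul, norm_smul]
      _ ≤ ‖G‖ * ‖replicateCol Unit x‖ := frobenius_norm_mul _ _
  have hG : ‖G‖ ^ 2 = ∑ i, ∑ j, ‖G i j‖ ^ 2 := by
    rw [frobenius_norm_def, ← Real.sqrt_eq_rpow, Real.sq_sqrt (by positivity)]
    simp_rw [Real.rpow_two]
  rw [← hG]
  gcongr

end Frobenius

variable [DecidableEq n]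

theorem inv_apply_eq_inv_det_mul_adjugate {K : Type*} [Field K] (M : Matrix n n K) (i j : n) :
    M⁻¹ i j = M.det⁻¹ * M.adjugate i j := by
  rw [inv_def, smul_apply, Ring.inverse_eq_inv', smul_eq_mul]

theorem inv_add_single_apply_self {K : Type*} [Field K] (M : Matrix n n K) (i : n) (t : K)
    (h : M⁻¹ i i ≠ 0) : (M + single i i t)⁻¹ i i = ((M⁻¹ i i)⁻¹ + t)⁻¹ := by
  have hrow : M + single i i t = M.updateRow i (M i + t • Pi.single i 1) := by
    ext j k
    rcases eq_or_ne j i with rfl | hj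
    · rcases eq_or_ne k j with rfl | hk <;> simp [*, Ne.symm]
    · simp [hj, Ne.symm hj]
  have hdet : (M + single i i t).det = M.det + t * M.adjugate i i := by
    rw [hrow, det_updateRow_add, det_updateRow_smul, updateRow_eq_self, adjugate_apply]
  have hadj : (M + single i i t).adjugate i i = M.adjugate i i := by
    rw [adjugate_apply, adjugate_apply, hrow, updateRow_idem]
  simp only [inv_apply_eq_inv_det_mul_adjugate, hdet, hadj] at h ⊢
  have ha : M.adjugate i i ≠ 0 := right_ne_zero_of_mul h
  rw [show (M.det⁻¹ * M.adjugate i i)⁻¹ + t = (M.det + t * M.adjugate i i) / M.adjugate i i by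
    field_simp, inv_div, inv_mul_eq_div]

namespace IsHermitian

variable {B : Matrix n n ℂ} (hB : B.IsHermitian) {z : ℂ}
include hB

theorem isUnit_sub_smul_one (hz : z.im ≠ 0) : IsUnit (B - z • 1) := by
  have hz : z ∉ spectrum ℂ B := by
    rw [hB.spectrum_eq_image_range]
    rintro ⟨r, -, rfl⟩
    exact hz (by simp)
  rw [spectrum.mem_iff, not_not, Algebra.algebraMap_eq_smul_one] at hz
  simpa using hz.neg

theorem inv_sub_smul_one_sub_conjTranspose (hz : z.im ≠ 0) :
    (B - z • 1)⁻¹ - (B - z • 1)⁻¹ᴴ = (z - star z) • ((B - z • 1)⁻¹ * (B - z • 1)⁻¹ᴴ) := by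
  set M := B - z • 1
  have hM : IsUnit M.det := (isUnit_iff_isUnit_det M).mp (hB.isUnit_sub_smul_one hz)
  have hMH : Mᴴ = M + (z - star z) • 1 := by
    simp only [M, conjTranspose_sub, conjTranspose_smul, conjTranspose_one, hB.eq]
    module
  have hGH : M⁻¹ * Mᴴ * M⁻¹ᴴ = M⁻¹ := by
    rw [Matrix.mul_assoc, ← conjTranspose_mul, nonsing_inv_mul M hM, conjTranspose_one,
      Matrix.mul_one]
  calc M⁻¹ - M⁻¹ᴴ = M⁻¹ * Mᴴ * M⁻¹ᴴ - M⁻¹ * M * M⁻¹ᴴ := by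
        rw [hGH, nonsing_inv_mul M hM, Matrix.one_mul]
    _ = (z - star z) • (M⁻¹ * M⁻¹ᴴ) := by
        rw [hMH, Matrix.mul_add, Matrix.add_mul, Matrix.mul_smul, Matrix.mul_one, Matrix.smul_mul]
        abel

theorem im_inv_sub_smul_one_apply_self (hz : z.im ≠ 0) (i : n) :
    ((B - z • 1)⁻¹ i i).im = z.im * ∑ j, ‖(B - z • 1)⁻¹ i j‖ ^ 2 := by
  have h := congrArg (fun X => (X i i).im) (hB.inv_sub_smul_one_sub_conjTranspose hz)
  simp only [sub_apply, smul_apply, mul_apply, conjTranspose_apply, smul_eq_mul] at h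
  simp_rw [RCLike.star_def, Complex.mul_conj', ← Complex.ofReal_pow, ← Complex.ofReal_sum] at h
  simp only [Complex.sub_im, Complex.conj_im, Complex.mul_im, Complex.sub_re, Complex.conj_re,
    Complex.ofReal_re, Complex.ofReal_im, mul_zero, sub_self] at h
  linarith

theorem im_inv_sub_smul_one_apply_self_pos (hz : 0 < z.im) (i : n) :
    0 < ((B - z • 1)⁻¹ i i).im := by
  rw [hB.im_inv_sub_smul_one_apply_self hz.ne' i]
  refine mul_pos hz (Finset.sum_pos' (fun j _ => by positivity) ?_)
  by_contra! hrow
  have hM := (isUnit_iff_isUnit_det _).mp (hB.isUnit_sub_smul_one hz.ne')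
  have h := congrFun₂ (nonsing_inv_mul _ hM) i i
  simp_all [mul_apply]

theorem div_sq_norm_le_sum_im_inv_sub_smul_one_apply_self (hz : 0 < z.im) {x : n → ℂ} {μ : ℂ}
    (hx : x ≠ 0) (hBx : B *ᵥ x = μ • x) :
    z.im / ‖μ - z‖ ^ 2 ≤ ∑ i, ((B - z • 1)⁻¹ i i).im := by
  set M := B - z • 1
  have hM := (isUnit_iff_isUnit_det M).mp (hB.isUnit_sub_smul_one hz.ne')
  have hMx : M *ᵥ x = (μ - z) • x := by
    rw [sub_mulVec, hBx, smul_mulVec, one_mulVec, sub_smul]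
  have hx' : (μ - z) • (M⁻¹ *ᵥ x) = x := by
    rw [← mulVec_smul, ← hMx, mulVec_mulVec, nonsing_inv_mul M hM, one_mulVec]
  have hμz : μ - z ≠ 0 := fun h => hx (by rw [← hx', h, zero_smul])
  have hGx : M⁻¹ *ᵥ x = (μ - z)⁻¹ • x := (eq_inv_smul_iff₀ hμz).mpr hx'
  calc z.im / ‖μ - z‖ ^ 2 = z.im * ‖(μ - z)⁻¹‖ ^ 2 := by rw [norm_inv, inv_pow, div_eq_mul_inv]
    _ ≤ z.im * ∑ i, ∑ j, ‖M⁻¹ i j‖ ^ 2 := by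
        gcongr; exact sq_norm_le_sum_sq_norm_of_mulVec_eq_smul hx hGx
    _ = ∑ i, (M⁻¹ i i).im := by
        rw [Finset.mul_sum]
        exact Finset.sum_congr rfl fun i _ => (hB.im_inv_sub_smul_one_apply_self hz.ne' i).symm

end IsHermitian

end Matrix

theorem ofReal_im_inv_ofReal_sub_eq_mul_cauchyPDF {w : ℂ} (hw : 0 ≤ w.im) (y : ℝ) :
    ENNReal.ofReal ((y : ℂ) - w)⁻¹.im = ENNReal.ofReal π * cauchyPDF w.re w.im.toNNReal y := by
  rw [cauchyPDF_def, cauchyPDFReal_def, Real.coe_toNNReal _ hw, ← ENNReal.ofReal_mul pi_pos.le,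
    Complex.inv_im, Complex.normSq_apply]
  congr 1
  simp only [Complex.sub_re, Complex.sub_im, Complex.ofReal_re, Complex.ofReal_im]
  field_simp
  ring

theorem lintegral_ofReal_im_inv_ofReal_sub {w : ℂ} (hw : 0 < w.im) :
    ∫⁻ y : ℝ, ENNReal.ofReal ((y : ℂ) - w)⁻¹.im = ENNReal.ofReal π := by
  simp_rw [ofReal_im_inv_ofReal_sub_eq_mul_cauchyPDF hw.le]
  rw [lintegral_const_mul _ (measurable_cauchyPDF _ _),
    lintegral_cauchyPDF_eq_one _ (by simpa using hw), mul_one]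

theorem lintegral_pi_le_of_forall_lintegral_update_le {ι : Type*} [Fintype ι] [DecidableEq ι]
    {X : ι → Type*} [∀ i, MeasurableSpace (X i)] {μ : ∀ i, Measure (X i)}
    [∀ i, IsProbabilityMeasure (μ i)] {f : (∀ i, X i) → ℝ≥0∞} (hf : Measurable f) (i : ι)
    {c : ℝ≥0∞} (h : ∀ x : ∀ i, X i, ∫⁻ y, f (Function.update x i y) ∂μ i ≤ c) :
    ∫⁻ x, f x ∂Measure.pi μ ≤ c := by
  calc ∫⁻ x, f x ∂Measure.pi μ ≤ ∫⁻ _, c ∂Measure.pi μ := by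
        refine lintegral_le_of_lmarginal_le {i} hf measurable_const fun x => ?_
        simpa [lmarginal_singleton] using h x
    _ = c := by simp

section Wegner

variable {n : Type*} [Fintype n] [DecidableEq n]

noncomputable def green (A : Matrix n n ℝ) (z : ℂ) (v : n → ℝ) : Matrix n n ℂ :=
  ((diagonal v + A).map (↑) - z • 1)⁻¹

variable {A : Matrix n n ℝ} {z : ℂ}

theorem continuous_green_apply (hA : A.IsSymm) (hz : z.im ≠ 0) (i j : n) :
    Continuous fun v => green A z v i j := by
  have hM : Continuous fun v : n → ℝ => (diagonal v + A).map ((↑) : ℝ → ℂ) - z • 1 := by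
    fun_prop
  refine (continuous_apply_apply i j).comp (continuous_iff_continuousAt.mpr fun v => ?_)
  refine (continuousAt_matrix_inv _ ?_).comp hM.continuousAt
  rw [Ring.inverse_eq_inv']
  exact continuousAt_inv₀ ((isUnit_iff_isUnit_det _).mp
    ((hA.isHermitian_map_ofReal_diagonal_add v).isUnit_sub_smul_one hz)).ne_zero

theorem measurable_ofReal_im_green_apply (hA : A.IsSymm) (hz : z.im ≠ 0) (i j : n) :
    Measurable fun v => ENNReal.ofReal (green A z v i j).im :=
  ENNReal.measurable_ofReal.comp
    (Complex.measurable_im.comp (continuous_green_apply hA hz i j).measurable)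

theorem green_apply_self_im_pos (hA : A.IsSymm) (hz : 0 < z.im) (v : n → ℝ) (i : n) :
    0 < (green A z v i i).im :=
  (hA.isHermitian_map_ofReal_diagonal_add v).im_inv_sub_smul_one_apply_self_pos hz i

theorem one_div_two_mul_le_sum_im_green (hA : A.IsSymm) {κ : ℝ} (hκ : 0 < κ) {v : n → ℝ}
    {μ : ℝ} (hμ : μ ∈ spectrum ℝ (diagonal v + A)) (hμκ : |μ| ≤ κ) :
    1 / (2 * κ) ≤ ∑ i, (green A (κ * Complex.I) v i i).im := by
  have hz : 0 < (κ * Complex.I).im := by simpa using hκ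
  obtain ⟨x, hx, hHx⟩ := exists_mulVec_eq_smul_of_mem_spectrum hμ
  have hxc : ((↑) ∘ x : n → ℂ) ≠ 0 := fun h => hx (funext fun i => by simpa using congrFun h i)
  have hHxc : (diagonal v + A).map ((↑) : ℝ → ℂ) *ᵥ ((↑) ∘ x) = (μ : ℂ) • ((↑) ∘ x) := by
    ext i
    exact (RingHom.map_mulVec Complex.ofRealHom _ x i).symm.trans (by simp [hHx])
  have hnorm : ‖(μ : ℂ) - κ * Complex.I‖ ^ 2 = μ ^ 2 + κ ^ 2 := by
    rw [← Complex.normSq_eq_norm_sq, Complex.normSq_apply]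
    simp
    ring
  calc 1 / (2 * κ) = κ / (κ ^ 2 + κ ^ 2) := by field_simp; ring
    _ ≤ κ / ‖(μ : ℂ) - κ * Complex.I‖ ^ 2 := by
        rw [hnorm]
        gcongr κ / (?_ + _)
        exact sq_le_sq' (abs_le.mp hμκ).1 (abs_le.mp hμκ).2
    _ ≤ ∑ i, (green A (κ * Complex.I) v i i).im := by
        simpa [green] using (hA.isHermitian_map_ofReal_diagonal_add v
          ).div_sq_norm_le_sum_im_inv_sub_smul_one_apply_self hz hxc hHxc

theorem exists_green_update_apply_self_eq_inv_sub (hA : A.IsSymm) (hz : 0 < z.im) (v : n → ℝ)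
    (i : n) :
    ∃ w : ℂ, 0 < w.im ∧ ∀ y : ℝ, green A z (Function.update v i y) i i = ((y : ℂ) - w)⁻¹ := by
  have hpos := green_apply_self_im_pos hA hz v i
  have hne : green A z v i i ≠ 0 := fun h => hpos.ne' (by simp [h])
  refine ⟨v i - (green A z v i i)⁻¹, ?_, fun y => ?_⟩
  · rw [Complex.sub_im, Complex.ofReal_im, Complex.inv_im, zero_sub, neg_div, neg_neg]
    exact div_pos hpos (Complex.normSq_pos.mpr hne)
  · have hM : (diagonal (Function.update v i y) + A).map ((↑) : ℝ → ℂ) - z • 1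
        = ((diagonal v + A).map (↑) - z • 1) + single i i ((y : ℂ) - v i) := by
      ext j k
      rcases eq_or_ne j i with rfl | hj
      · rcases eq_or_ne k j with rfl | hk
        · simp; ring
        · simp [Ne.symm hk]
      · simp [diagonal_apply, Function.update_of_ne hj, Ne.symm hj]
    calc green A z (Function.update v i y) i i
        = ((green A z v i i)⁻¹ + ((y : ℂ) - v i))⁻¹ := by
          rw [green, hM]; exact inv_add_single_apply_self _ _ _ hne
      _ = ((y : ℂ) - (v i - (green A z v i i)⁻¹))⁻¹ := by ring

theorem lintegral_ofReal_im_green_apply_self_le (hA : A.IsSymm) (hz : 0 < z.im)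
    {ν : n → Measure ℝ} [∀ i, IsProbabilityMeasure (ν i)] {ρ : ℝ≥0}
    (hρ : ∀ i, ν i ≤ (ρ : ℝ≥0∞) • volume) (i : n) :
    ∫⁻ v, ENNReal.ofReal (green A z v i i).im ∂Measure.pi ν ≤ ρ * ENNReal.ofReal π := by
  refine lintegral_pi_le_of_forall_lintegral_update_le
    (measurable_ofReal_im_green_apply hA hz.ne' i i) i fun v => ?_
  obtain ⟨w, hw, hG⟩ := exists_green_update_apply_self_eq_inv_sub hA hz v i
  simp_rw [hG]
  calc ∫⁻ y, ENNReal.ofReal ((y : ℂ) - w)⁻¹.im ∂ν i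
      ≤ ∫⁻ y : ℝ, ENNReal.ofReal ((y : ℂ) - w)⁻¹.im ∂((ρ : ℝ≥0∞) • volume) :=
        lintegral_mono' (hρ i) le_rfl
    _ = ρ * ENNReal.ofReal π := by
        rw [lintegral_smul_measure, lintegral_ofReal_im_inv_ofReal_sub hw, smul_eq_mul]

theorem pi_setOf_exists_mem_spectrum_abs_lt_le (hA : A.IsSymm) {ν : n → Measure ℝ}
    [∀ i, IsProbabilityMeasure (ν i)] {ρ : ℝ≥0} (hρ : ∀ i, ν i ≤ (ρ : ℝ≥0∞) • volume)
    {κ : ℝ} (hκ : 0 < κ) :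
    Measure.pi ν {v | ∃ μ ∈ spectrum ℝ (diagonal v + A), |μ| < κ}
      ≤ ENNReal.ofReal (2 * π * ρ * κ * Fintype.card n) := by
  set F : (n → ℝ) → ℝ≥0∞ := fun v => ∑ i, ENNReal.ofReal (green A (κ * Complex.I) v i i).im
  have hz : 0 < (κ * Complex.I).im := by simpa using hκ
  have hF : Measurable F :=
    Finset.measurable_sum _ fun i _ => measurable_ofReal_im_green_apply hA hz.ne' i i
  have hsub : {v | ∃ μ ∈ spectrum ℝ (diagonal v + A), |μ| < κ}
      ⊆ {v | ENNReal.ofReal (1 / (2 * κ)) ≤ F v} := by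
    rintro v ⟨μ, hμ, hμκ⟩
    show ENNReal.ofReal _ ≤ ∑ i, ENNReal.ofReal _
    rw [← ENNReal.ofReal_sum_of_nonneg fun i _ => (green_apply_self_im_pos hA hz v i).le]
    exact ENNReal.ofReal_le_ofReal (one_div_two_mul_le_sum_im_green hA hκ hμ hμκ.le)
  have hint : ∫⁻ v, F v ∂Measure.pi ν ≤ Fintype.card n * (ρ * ENNReal.ofReal π) := by
    rw [lintegral_finsetSum _ fun i _ => measurable_ofReal_im_green_apply hA hz.ne' i i]
    refine (Finset.sum_le_card_nsmul _ _ _ fun i _ =>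
      lintegral_ofReal_im_green_apply_self_le hA hz hρ i).trans_eq ?_
    rw [Finset.card_univ, nsmul_eq_mul]
  calc Measure.pi ν {v | ∃ μ ∈ spectrum ℝ (diagonal v + A), |μ| < κ}
      ≤ Measure.pi ν {v | ENNReal.ofReal (1 / (2 * κ)) ≤ F v} := measure_mono hsub
    _ ≤ (∫⁻ v, F v ∂Measure.pi ν) / ENNReal.ofReal (1 / (2 * κ)) :=
        meas_ge_le_lintegral_div hF.aemeasurable (by simpa using hκ) ENNReal.ofReal_ne_top
    _ ≤ Fintype.card n * (ρ * ENNReal.ofReal π) / ENNReal.ofReal (1 / (2 * κ)) := by gcongr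
    _ = ENNReal.ofReal (2 * π * ρ * κ * Fintype.card n) := by
        rw [← ENNReal.ofReal_coe_nnreal, ← ENNReal.ofReal_natCast,
          ← ENNReal.ofReal_mul (by positivity), ← ENNReal.ofReal_mul (by positivity),
          ← ENNReal.ofReal_div_of_pos (by positivity)]
        congr 1
        field_simp

end Wegner

/-- Wegner-type estimate \eqref{1.4}.
Let `Ω₁` be a finite index set, `A` a fixed real symmetric `Ω₁ × Ω₁` matrix, and
`(V_i)_{i ∈ Ω₁}` independent real random variables whose laws have densities bounded
by `ρ`.  Let `D_V = Σ_{i ∈ Ω₁} V_i eᵢ ⊗ eᵢ`.  Then for every `κ > 0`, the probability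
that some eigenvalue of `D_V + A` has absolute value less than `κ` is at most
`C·ρ·κ·|Ω₁|`, with `C` an absolute constant. -/
theorem statement1 :
    ∃ C : ℝ, 0 < C ∧
      ∀ (Ω₁ : Type) [Fintype Ω₁] [DecidableEq Ω₁] (A : Matrix Ω₁ Ω₁ ℝ), A.IsSymm →
      ∀ (Ωp : Type) [MeasureSpace Ωp], IsProbabilityMeasure (ℙ : Measure Ωp) →
      ∀ (ρ : ℝ≥0) (V : Ω₁ → Ωp → ℝ),
        (∀ i, Measurable (V i)) →
        iIndepFun V ℙ →
        (∀ i, (ℙ : Measure Ωp).map (V i) ≤ (ρ : ℝ≥0∞) • volume) →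
      ∀ κ : ℝ, 0 < κ →
        (ℙ : Measure Ωp)
          {ω | ∃ μ ∈ spectrum ℝ (Matrix.diagonal (fun i => V i ω) + A), |μ| < κ}
          ≤ ENNReal.ofReal (C * ρ * κ * Fintype.card Ω₁) := by
  refine ⟨2 * π, by positivity, fun Ω₁ _ _ A hA Ωp _ hP ρ V hV hind hρ κ hκ => ?_⟩
  have : ∀ i, IsProbabilityMeasure ((ℙ : Measure Ωp).map (V i)) := fun i =>
    Measure.isProbabilityMeasure_map (hV i).aemeasurable
  calc (ℙ : Measure Ωp) {ω | ∃ μ ∈ spectrum ℝ (diagonal (fun i => V i ω) + A), |μ| < κ}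
      ≤ (ℙ : Measure Ωp).map (fun ω i => V i ω)
          {v | ∃ μ ∈ spectrum ℝ (diagonal v + A), |μ| < κ} :=
        Measure.le_map_apply (measurable_pi_lambda _ hV).aemeasurable _
    _ = Measure.pi (fun i => (ℙ : Measure Ωp).map (V i))
          {v | ∃ μ ∈ spectrum ℝ (diagonal v + A), |μ| < κ} := by
        rw [hind.map_fun_eq_pi_map fun i => (hV i).aemeasurable]
    _ ≤ ENNReal.ofReal (2 * π * ρ * κ * Fintype.card Ω₁) :=
        pi_setOf_exists_mem_spectrum_abs_lt_le hA hρ hκ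
end

section
/- Let W ≥ 1, I = [0, N−1] ⊂ ℤ, E ∈ ℝ, and (v_i)_{i∈I} real numbers. Consider the strip operator H_I on ℓ²(I × ℤ_W) with fiber-constant potential V_{ij} = v_i, and the one-dimensional operator h_I on ℓ²(I) with potential (v_i). Suppose that for every w ∈ {0,1,…,W−1}, the matrix h_I − E'_w with E'_w = E − 2cos(2πw/W) is invertible, and that for fixed i, i' ∈ I the matrix entries satisfy |(h_I − E'_w)^{-1}(i,i')| < ε for all w. Then H_I − E is invertible on the relevant subspace and |(H_I − E)^{-1}((i,j),(i',j'))| < ε for all j, j' ∈ ℤ_W (assuming additionally that each h_I − E'_w is invertible). -/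
open MeasureTheory ProbabilityTheory Real Matrix
open scoped ENNReal NNReal

/-- The ℓ² operator norm of a real square matrix. -/
noncomputable def opNorm {n : Type} [Fintype n] [DecidableEq n] (M : Matrix n n ℝ) : ℝ :=
  ‖Matrix.toEuclideanCLM (𝕜 := ℝ) (n := n) M‖

/-- The strip Schrödinger operator `H_I` on `I × ℤ_W`, where `I = [a, a+N-1] ⊂ ℤ`
(indexed by `Fin N`), with potential `V`, Dirichlet boundary conditions in the
first coordinate and periodic boundary conditions in the second coordinate. -/
noncomputable def stripH (W N : ℕ) [NeZero W] (a : ℤ) (V : ℤ → ZMod W → ℝ) :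
    Matrix (Fin N × ZMod W) (Fin N × ZMod W) ℝ :=
  Matrix.of fun p q =>
    (if p = q then V (a + (p.1 : ℕ)) p.2 else 0)
    + (if p.1 = q.1 ∧ q.2 = p.2 + 1 then 1 else 0)
    + (if p.1 = q.1 ∧ q.2 = p.2 - 1 then 1 else 0)
    + (if p.2 = q.2 ∧ (q.1 : ℕ) = (p.1 : ℕ) + 1 then 1 else 0)
    + (if p.2 = q.2 ∧ (p.1 : ℕ) = (q.1 : ℕ) + 1 then 1 else 0)

/-- The one-dimensional Schrödinger operator `h_I` on `I = [a, a+N-1] ⊂ ℤ`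
(indexed by `Fin N`), with potential `v` and Dirichlet boundary conditions. -/
noncomputable def oneDH (N : ℕ) (a : ℤ) (v : ℤ → ℝ) : Matrix (Fin N) (Fin N) ℝ :=
  Matrix.of fun i i' =>
    (if i = i' then v (a + (i : ℕ)) else 0)
    + (if (i' : ℕ) = (i : ℕ) + 1 then 1 else 0)
    + (if (i : ℕ) = (i' : ℕ) + 1 then 1 else 0)

/-- `‖P_{{i}} G P_{{i'}}‖`: the operator norm of the `W × W` block of `G`
corresponding to rows `{i} × ℤ_W` and columns `{i'} × ℤ_W`. -/
noncomputable def blockNorm {W N : ℕ} [NeZero W]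
    (G : Matrix (Fin N × ZMod W) (Fin N × ZMod W) ℝ) (i i' : Fin N) : ℝ :=
  opNorm (Matrix.of fun j j' : ZMod W => G (i, j) (i', j'))


/-!
Because the potential is constant along the fibres, `H_I − E = (h_I − E) ⊗ 1 + 1 ⊗ Δ`, where `Δ`
is the adjacency matrix of the cycle `ℤ_W`. The cosine kernels `c_w(j, l) = cos (2π w (j − l) / W)`
satisfy `Δ c_w = 2 cos (2π w / W) c_w` and `∑_w c_w = W · 1`, so
`W⁻¹ ∑_w (h_I − E'_w)⁻¹ ⊗ c_w` is a right inverse of `H_I − E`. Each of its entries is an average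
of `W` numbers `(h_I − E'_w)⁻¹(i, i') c_w(j, j')` of modulus `< ε`.
-/

open scoped Kronecker

theorem Matrix.kronecker_add_mul_sum_eq_one {R m n ι : Type*} [CommRing R] [Fintype m]
    [DecidableEq m] [Fintype n] [DecidableEq n] [Fintype ι] (A : Matrix m m R) (C : Matrix n n R)
    (K : ι → Matrix n n R) (μ : ι → R) (B : ι → Matrix m m R)
    (hK : ∀ w, C * K w = μ w • K w) (hB : ∀ w, (A + μ w • 1) * B w = 1) (hsum : ∑ w, K w = 1) :
    (A ⊗ₖ 1 + 1 ⊗ₖ C) * ∑ w, B w ⊗ₖ K w = 1 := by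
  have hterm : ∀ w, (A ⊗ₖ 1 + 1 ⊗ₖ C) * (B w ⊗ₖ K w) = 1 ⊗ₖ K w := fun w =>
    calc (A ⊗ₖ 1 + 1 ⊗ₖ C) * (B w ⊗ₖ K w) = (A * B w) ⊗ₖ K w + B w ⊗ₖ (C * K w) := by
          rw [add_mul, ← mul_kronecker_mul, ← mul_kronecker_mul, one_mul, one_mul]
      _ = ((A + μ w • 1) * B w) ⊗ₖ K w := by
          rw [hK, kronecker_smul, add_mul, smul_mul, one_mul, add_kronecker, smul_kronecker]
      _ = 1 ⊗ₖ K w := by rw [hB]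
  rw [Finset.mul_sum, Finset.sum_congr rfl fun w _ => hterm w, ← one_kronecker_one, ← hsum]
  ext
  simp [Matrix.sum_apply, Finset.mul_sum]

theorem abs_sum_mul_inv_card_mul_lt {ι : Type*} [Fintype ι] [Nonempty ι] {ε : ℝ} (a c : ι → ℝ)
    (ha : ∀ w, |a w| < ε) (hc : ∀ w, |c w| ≤ 1) :
    |∑ w, a w * ((Fintype.card ι : ℝ)⁻¹ * c w)| < ε := by
  have hcard : (0 : ℝ) < Fintype.card ι := by exact_mod_cast Fintype.card_pos
  calc |∑ w, a w * ((Fintype.card ι : ℝ)⁻¹ * c w)|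
      ≤ ∑ w, |a w| * (Fintype.card ι : ℝ)⁻¹ := by
        refine (Finset.abs_sum_le_sum_abs _ _).trans (Finset.sum_le_sum fun w _ => ?_)
        rw [abs_mul, abs_mul, abs_inv, Nat.abs_cast]
        gcongr
        exact mul_le_of_le_one_right (by positivity) (hc w)
    _ < ∑ _w : ι, ε * (Fintype.card ι : ℝ)⁻¹ :=
        Finset.sum_lt_sum_of_nonempty Finset.univ_nonempty fun w _ => by gcongr; exact ha w
    _ = ε := by simp [field]

noncomputable def cycleAdj (W : ℕ) : Matrix (ZMod W) (ZMod W) ℝ :=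
  Matrix.of fun j l => (if l = j + 1 then 1 else 0) + (if l = j - 1 then 1 else 0)

theorem stripH_fiberConstant (W N : ℕ) [NeZero W] (a : ℤ) (v : ℤ → ℝ) :
    stripH W N a (fun i _ => v i) = oneDH N a v ⊗ₖ 1 + 1 ⊗ₖ cycleAdj W := by
  ext ⟨p, j⟩ ⟨q, l⟩
  by_cases hpq : p = q <;> by_cases hjl : j = l <;>
    simp [stripH, oneDH, cycleAdj, kroneckerMap_apply, one_apply, hpq, hjl, add_assoc]

section Fourier

variable {W : ℕ} [NeZero W]

noncomputable def cosChar (W w : ℕ) (k : ZMod W) : ℝ :=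
  Real.cos (2 * π * w / W * k.val)

theorem cosChar_intCast (w : ℕ) (d : ℤ) : cosChar W w d = Real.cos (2 * π * w / W * d) := by
  have hW : (W : ℝ) ≠ 0 := Nat.cast_ne_zero.mpr (NeZero.ne W)
  have hval : ((d : ZMod W).val : ℝ) = ((d % W : ℤ) : ℝ) := by exact_mod_cast ZMod.val_intCast d
  have hd : (d : ℝ) = ((d % W : ℤ) : ℝ) + W * ((d / W : ℤ) : ℝ) := by
    exact_mod_cast (Int.emod_add_mul_ediv d W).symm
  rw [cosChar, hval, hd, ← Real.cos_add_int_mul_two_pi _ (w * (d / W))]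
  congr 1
  push_cast
  field_simp

theorem cosChar_add_one_add_cosChar_sub_one (w : ℕ) (k : ZMod W) :
    cosChar W w (k + 1) + cosChar W w (k - 1) = 2 * Real.cos (2 * π * w / W) * cosChar W w k := by
  obtain ⟨d, rfl⟩ : ∃ d : ℤ, (d : ZMod W) = k := ⟨k.val, by simp⟩
  rw [← Int.cast_one, ← Int.cast_add, ← Int.cast_sub, cosChar_intCast, cosChar_intCast,
    cosChar_intCast]
  push_cast
  rw [mul_add, mul_sub, mul_one, Real.cos_add, Real.cos_sub]
  ring

theorem sum_cosChar (k : ZMod W) :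
    ∑ w : Fin W, cosChar W w k = if k = 0 then (W : ℝ) else 0 := by
  set ζ : ℂ := Complex.exp (2 * π * Complex.I / W)
  have hζ : IsPrimitiveRoot ζ W := Complex.isPrimitiveRoot_exp W (NeZero.ne W)
  have hre : ∀ w : ℕ, cosChar W w k = ((ζ ^ k.val) ^ w).re := by
    intro w
    rw [← pow_mul, ← Complex.exp_nat_mul, cosChar, ← Complex.exp_ofReal_mul_I_re]
    congr 2
    push_cast
    ring
  simp_rw [hre, ← Complex.re_sum]
  rw [Fin.sum_univ_eq_sum_range (fun w => (ζ ^ k.val) ^ w)]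
  split_ifs with hk
  · simp [hk]
  · have hne : ζ ^ k.val ≠ 1 :=
      hζ.pow_ne_one_of_pos_of_lt ((ZMod.val_ne_zero k).mpr hk) (ZMod.val_lt k)
    rw [geom_sum_eq hne, ← pow_mul, mul_comm, pow_mul, hζ.pow_eq_one, one_pow, sub_self,
      zero_div, Complex.zero_re]

noncomputable def cosKernel (W w : ℕ) : Matrix (ZMod W) (ZMod W) ℝ :=
  Matrix.of fun j l => cosChar W w (j - l)

theorem cycleAdj_mul_cosKernel (w : ℕ) :
    cycleAdj W * cosKernel W w = (2 * Real.cos (2 * π * w / W)) • cosKernel W w := by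
  ext j l
  simp only [mul_apply, cycleAdj, cosKernel, of_apply, add_mul, ite_mul, one_mul, zero_mul,
    Finset.sum_add_distrib, Finset.sum_ite_eq', Finset.mem_univ, if_true, Matrix.smul_apply,
    smul_eq_mul]
  rw [← cosChar_add_one_add_cosChar_sub_one]
  ring_nf

theorem sum_cosKernel : ∑ w : Fin W, cosKernel W w = (W : ℝ) • 1 := by
  ext j l
  simp only [Matrix.sum_apply, cosKernel, of_apply, sum_cosChar, sub_eq_zero, Matrix.smul_apply,
    one_apply, smul_eq_mul, mul_ite, mul_one, mul_zero]

end Fourier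

/-- fiber decomposition: entry bound, from the proof of Lemma 2.
Let `W ≥ 1`, `I = [0, N-1] ⊂ ℤ`, `E ∈ ℝ` and `(v_i)` real numbers.  Consider the strip
operator `H_I` with fiber-constant potential `V_{ij} = v_i` and the one-dimensional
operator `h_I` with potential `(v_i)`.  Suppose that for every `w ∈ {0, …, W-1}` the
matrix `h_I − E'_w` with `E'_w = E − 2cos(2πw/W)` is invertible, and for fixed
`i, i' ∈ I` the entries satisfy `|(h_I − E'_w)⁻¹(i,i')| < ε` for all `w`.  Then
`H_I − E` is invertible and `|(H_I − E)⁻¹((i,j),(i',j'))| < ε` for all `j, j' ∈ ℤ_W`. -/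
theorem statement3 (W : ℕ) [NeZero W] (N : ℕ) (v : ℤ → ℝ) (E ε : ℝ) (i i' : Fin N)
    (hinv : ∀ w : Fin W,
      IsUnit (oneDH N 0 v - (E - 2 * Real.cos (2 * Real.pi * w / W)) • 1))
    (hent : ∀ w : Fin W,
      |((oneDH N 0 v - (E - 2 * Real.cos (2 * Real.pi * w / W)) • 1)⁻¹) i i'| < ε) :
    IsUnit (stripH W N 0 (fun i _ => v i) - E • 1) ∧
    ∀ j j' : ZMod W,
      |((stripH W N 0 (fun i _ => v i) - E • 1)⁻¹) (i, j) (i', j')| < ε := by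
  set μ : Fin W → ℝ := fun w => 2 * Real.cos (2 * π * w / W)
  set B : Fin W → Matrix (Fin N) (Fin N) ℝ := fun w => (oneDH N 0 v - (E - μ w) • 1)⁻¹
  set K : Fin W → Matrix (ZMod W) (ZMod W) ℝ := fun w => (W : ℝ)⁻¹ • cosKernel W w
  have hdecomp : stripH W N 0 (fun i _ => v i) - E • 1
      = (oneDH N 0 v - E • 1) ⊗ₖ (1 : Matrix (ZMod W) (ZMod W) ℝ)
        + (1 : Matrix (Fin N) (Fin N) ℝ) ⊗ₖ cycleAdj W := by
    rw [stripH_fiberConstant, ← one_kronecker_one, ← smul_kronecker]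
    ext
    simp [kroneckerMap_apply, sub_mul]
    ring
  have hG : (stripH W N 0 (fun i _ => v i) - E • 1) * ∑ w, B w ⊗ₖ K w = 1 := by
    rw [hdecomp]
    refine kronecker_add_mul_sum_eq_one _ _ K μ B (fun w => ?_) (fun w => ?_) ?_
    · rw [mul_smul_comm, cycleAdj_mul_cosKernel, smul_comm]
    · rw [show oneDH N 0 v - E • 1 + μ w • 1 = oneDH N 0 v - (E - μ w) • 1 by
        rw [sub_smul]; abel]
      exact mul_nonsing_inv _ ((isUnit_iff_isUnit_det _).mp (hinv w))
    · rw [← Finset.smul_sum, sum_cosKernel, smul_smul,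
        inv_mul_cancel₀ (Nat.cast_ne_zero.mpr (NeZero.ne W)), one_smul]
  refine ⟨(isUnit_iff_isUnit_det _).mpr (isUnit_det_of_right_inverse hG), fun j j' => ?_⟩
  rw [inv_eq_right_inv hG, Matrix.sum_apply]
  have hbound := abs_sum_mul_inv_card_mul_lt (fun w => B w i i') (fun w => cosChar W w (j - j'))
    hent (fun w => Real.abs_cos_le_one _)
  simpa [K, cosKernel, kroneckerMap_apply] using hbound
end

section
/- Let W ≥ 1, let I = [a, b] ⊂ ℤ be a finite interval, let a ≤ m < b, let V be any potential on I × ℤ_W, and let E ∈ ℝ. Assume that both H_I − E and H_{[a,m]} − E are invertible, and write G_I = (H_I − E)^{-1}, G_{[a,m]} = (H_{[a,m]} − E)^{-1}. Then ‖P_{{a}} G_I P_{{b}}‖ ≤ ‖P_{{a}} G_{[a,m]} P_{{m}}‖ · ‖P_{{m+1}} G_I P_{{b}}‖, where the norms are operator norms. -/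
open MeasureTheory ProbabilityTheory Real Matrix
open scoped ENNReal NNReal

/-- resolvent identity inequality, \eqref{3.4}.
Let `W ≥ 1`, `I = [a, b] ⊂ ℤ` a finite interval with `K` points (so `b = a + K - 1`),
and `a ≤ m < b` with `M` the number of points of `[a, m]` (so `m = a + M - 1`,
`1 ≤ M < K`).  For any potential `V` and energy `E`, if both `H_I − E` and
`H_{[a,m]} − E` are invertible, then
`‖P_{{a}} G_I P_{{b}}‖ ≤ ‖P_{{a}} G_{[a,m]} P_{{m}}‖ · ‖P_{{m+1}} G_I P_{{b}}‖`. -/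
theorem statement6 (W : ℕ) [NeZero W] (K M : ℕ) (hM : 0 < M) (hMK : M < K)
    (a : ℤ) (V : ℤ → ZMod W → ℝ) (E : ℝ)
    (hI : IsUnit (stripH W K a V - E • 1))
    (hsub : IsUnit (stripH W M a V - E • 1)) :
    blockNorm ((stripH W K a V - E • 1)⁻¹) ⟨0, by omega⟩ ⟨K - 1, by omega⟩
      ≤ blockNorm ((stripH W M a V - E • 1)⁻¹) ⟨0, hM⟩ ⟨M - 1, by omega⟩
        * blockNorm ((stripH W K a V - E • 1)⁻¹) ⟨M, hMK⟩ ⟨K - 1, by omega⟩ := by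
  classical
  have hMK' : M ≤ K := hMK.le
  have hK : 0 < K := hM.trans hMK
  set A : Matrix (Fin K × ZMod W) (Fin K × ZMod W) ℝ := stripH W K a V - E • 1 with hA
  set B : Matrix (Fin M × ZMod W) (Fin M × ZMod W) ℝ := stripH W M a V - E • 1 with hB
  have hAdet : IsUnit A.det := (Matrix.isUnit_iff_isUnit_det A).mp hI
  have hBdet : IsUnit B.det := (Matrix.isUnit_iff_isUnit_det B).mp hsub
  have hAG : A * A⁻¹ = 1 := Matrix.mul_nonsing_inv A hAdet
  have hGB : B⁻¹ * B = 1 := Matrix.nonsing_inv_mul B hBdet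
  -- comparison of entries of B and A on the sub-block
  have hBA : ∀ (i i' : Fin M) (j j' : ZMod W),
      B (i, j) (i', j') = A (Fin.castLE hMK' i, j) (Fin.castLE hMK' i', j') := by
    intro i i' j j'
    simp only [hA, hB, stripH, Matrix.sub_apply, Matrix.smul_apply, Matrix.one_apply,
      Matrix.of_apply, Prod.mk.injEq, Fin.castLE_inj, Fin.coe_castLE]
  -- entries of A connecting a low row to a high column
  have hAhi : ∀ (i : Fin M) (j0 : ZMod W) (k : Fin K) (l : ZMod W), M ≤ (k : ℕ) →
      A (Fin.castLE hMK' i, j0) (k, l)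
        = if j0 = l ∧ (k : ℕ) = (i : ℕ) + 1 then 1 else 0 := by
    intro i j0 k l hk
    have hi : (i : ℕ) < M := i.isLt
    have hne : (i : ℕ) ≠ (k : ℕ) := by omega
    have hne2 : (i : ℕ) ≠ (k : ℕ) + 1 := by omega
    simp [hA, stripH, Matrix.sub_apply, Matrix.smul_apply, Matrix.one_apply,
      Prod.ext_iff, Fin.ext_iff, hne, hne2]
  -- the key resolvent identity, entrywise
  have key : ∀ j j' : ZMod W,
      A⁻¹ (⟨0, hK⟩, j) (⟨K - 1, by omega⟩, j')
        = -∑ j'' : ZMod W, B⁻¹ (⟨0, hM⟩, j) (⟨M - 1, by omega⟩, j'')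
            * A⁻¹ (⟨M, hMK⟩, j'') (⟨K - 1, by omega⟩, j') := by
    intro j j'
    set col : Fin K × ZMod W := (⟨K - 1, by omega⟩, j') with hcol
    set x : Fin M × ZMod W → ℝ := fun q => A⁻¹ (Fin.castLE hMK' q.1, q.2) col with hx
    set y : Fin M × ZMod W → ℝ :=
      fun q => if (q.1 : ℕ) + 1 = M then A⁻¹ ((⟨M, hMK⟩ : Fin K), q.2) col else 0 with hy
    have step1 : B.mulVec x = -y := by
      funext p
      obtain ⟨i, j0⟩ := p
      set f : ℕ → ℝ := fun n =>
        if hn : n < K then ∑ l, A (Fin.castLE hMK' i, j0) ((⟨n, hn⟩ : Fin K), l)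
          * A⁻¹ ((⟨n, hn⟩ : Fin K), l) col else 0 with hf
      have hi : (i : ℕ) < M := i.isLt
      have h0 : ∑ q : Fin K × ZMod W, A (Fin.castLE hMK' i, j0) q * A⁻¹ q col = 0 := by
        rw [← Matrix.mul_apply, hAG]
        refine Matrix.one_apply_ne ?_
        intro h
        have := congrArg (fun p : Fin K × ZMod W => (p.1 : ℕ)) h
        simp [hcol] at this
        omega
      have hsplit : ∑ q : Fin K × ZMod W, A (Fin.castLE hMK' i, j0) q * A⁻¹ q col
          = ∑ n ∈ Finset.range K, f n := by
        rw [Fintype.sum_prod_type, ← Fin.sum_univ_eq_sum_range]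
        refine Finset.sum_congr rfl fun k _ => ?_
        rw [hf]
        simp [k.isLt]
      have hIco : ∑ n ∈ Finset.range K, f n
          = (∑ n ∈ Finset.Ico 0 M, f n) + ∑ n ∈ Finset.Ico M K, f n := by
        rw [Finset.range_eq_Ico, ← Finset.sum_Ico_consecutive f (Nat.zero_le M) hMK']
      have hpart1 : ∑ n ∈ Finset.Ico 0 M, f n
          = ∑ q : Fin M × ZMod W, B (i, j0) q * x q := by
        rw [← Finset.range_eq_Ico, ← Fin.sum_univ_eq_sum_range, Fintype.sum_prod_type]
        refine Finset.sum_congr rfl fun i'' _ => ?_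
        have hlt : (i'' : ℕ) < K := lt_of_lt_of_le i''.isLt hMK'
        rw [hf]
        simp only [dif_pos hlt]
        refine Finset.sum_congr rfl fun l _ => ?_
        have hcast : (⟨(i'' : ℕ), hlt⟩ : Fin K) = Fin.castLE hMK' i'' := rfl
        rw [hcast, ← hBA]
      have hfhi : ∀ n (hn : n < K), M ≤ n →
          f n = if n = (i : ℕ) + 1 then A⁻¹ ((⟨n, hn⟩ : Fin K), j0) col else 0 := by
        intro n hn hMn
        rw [hf]
        simp only [dif_pos hn]
        rw [Finset.sum_congr rfl fun l _ => by
          rw [hAhi i j0 ⟨n, hn⟩ l hMn]]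
        by_cases hc : n = (i : ℕ) + 1
        · simp [hc]
        · simp [hc]
      have hpart2 : ∑ n ∈ Finset.Ico M K, f n = y (i, j0) := by
        have hM_mem : M ∈ Finset.Ico M K := by simp [Finset.mem_Ico]; omega
        rw [Finset.sum_eq_single_of_mem M hM_mem ?_]
        · rw [hfhi M hMK le_rfl, hy]
          by_cases hc : (i : ℕ) + 1 = M
          · simp [hc]
          · simp only [hc, if_false]
            rw [if_neg (by omega)]
        · intro n hn hne
          rw [Finset.mem_Ico] at hn
          rw [hfhi n hn.2 hn.1, if_neg (by omega)]
      have : (∑ q : Fin M × ZMod W, B (i, j0) q * x q) + y (i, j0) = 0 := by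
        rw [← hpart1, ← hpart2, ← hIco, ← hsplit, h0]
      have hmv : B.mulVec x (i, j0) = ∑ q : Fin M × ZMod W, B (i, j0) q * x q := rfl
      have : B.mulVec x (i, j0) = -(y (i, j0)) := by rw [hmv]; linarith
      simpa using this
    have step2 : x = -(B⁻¹.mulVec y) := by
      have h1 : B⁻¹.mulVec (B.mulVec x) = x := by
        rw [Matrix.mulVec_mulVec, hGB, Matrix.one_mulVec]
      rw [step1, Matrix.mulVec_neg] at h1
      rw [← h1]
    have hx0 : x (⟨0, hM⟩, j) = A⁻¹ (⟨0, hK⟩, j) col := rfl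
    rw [← hx0, step2]
    simp only [Pi.neg_apply, neg_inj]
    rw [Matrix.mulVec, dotProduct, Fintype.sum_prod_type]
    have hstep : ∀ i'' : Fin M,
        (∑ j'' : ZMod W, B⁻¹ (⟨0, hM⟩, j) (i'', j'') * y (i'', j''))
          = if i'' = (⟨M - 1, by omega⟩ : Fin M) then
              ∑ j'' : ZMod W, B⁻¹ (⟨0, hM⟩, j) (i'', j'')
                * A⁻¹ ((⟨M, hMK⟩ : Fin K), j'') col else 0 := by
      intro i''
      by_cases hc : i'' = (⟨M - 1, by omega⟩ : Fin M)
      · rw [if_pos hc]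
        refine Finset.sum_congr rfl fun j'' _ => ?_
        have hcv : (i'' : ℕ) + 1 = M := by
          rw [hc]; simp; omega
        rw [hy]; simp only [hcv, if_true]
      · rw [if_neg hc]
        have hcn : ¬ ((i'' : ℕ) + 1 = M) := by
          intro h
          exact hc (Fin.ext (by simp; omega))
        simp only [hy, hcn, if_false, mul_zero, Finset.sum_const_zero]
    rw [Finset.sum_congr rfl fun i'' _ => hstep i'', Finset.sum_ite_eq' Finset.univ _ _]
    simp
  -- conclude via operator norm submultiplicativity
  have hblock : (Matrix.of fun j j' : ZMod W =>
        A⁻¹ ((⟨0, by omega⟩ : Fin K), j) ((⟨K - 1, by omega⟩ : Fin K), j'))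
      = -((Matrix.of fun j j'' : ZMod W =>
            B⁻¹ ((⟨0, hM⟩ : Fin M), j) ((⟨M - 1, by omega⟩ : Fin M), j''))
          * (Matrix.of fun j'' j' : ZMod W =>
            A⁻¹ ((⟨M, hMK⟩ : Fin K), j'') ((⟨K - 1, by omega⟩ : Fin K), j'))) := by
    ext j j'
    rw [Matrix.neg_apply, Matrix.mul_apply]
    simpa using key j j'
  show opNorm _ ≤ opNorm _ * opNorm _
  rw [hblock, opNorm, map_neg, norm_neg, _root_.map_mul]
  exact norm_mul_le _ _
end
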